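/- arXiv:1109.2380 — 3 statements merged into one kernel-verified Lean document; each statement's English description precedes it below -/
import Mathlib

section
/- Lemma 3.7, specialized to expanding affine maps: Let {(a_i(λ)z+b_i(λ))_{i=1}^m}_{λ∈U} be a continuous expanding affine family over a nonempty bounded open set U ⊆ ℝ^d which satisfies the transversality condition (TC). Let λ₀ ∈ U with s(λ₀) > 2, and let μ be the Bernoulli measure on Σ_m with weight vector (|a_1(λ₀)|^{−s(λ₀)}, …, |a_m(λ₀)|^{−s(λ₀)}) (a probability vector by the definition of s(λ₀)). Then there exists δ > 0 with B(λ₀,δ) ⊆ U such that for Leb_d-almost every λ ∈ B(λ₀,δ): the pushforward measure (π_λ)_*μ on J_λ ⊆ ℂ is absolutely continuous with respect to Leb₂ with Radon–Nikodym density in L²(Leb₂), and Leb₂(J_λ) > 0. -/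
open MeasureTheory Filter Set Metric ENNReal

/-- `affineIter a b ω n = φ_{ω₁} ∘ ⋯ ∘ φ_{ω_n} (0)`, where `φ_i(z) = (z - b i)/(a i)`
is the inverse of the affine map `g_i(z) = a i * z + b i`. -/
noncomputable def affineIter {m : ℕ} (a b : Fin m → ℂ) (ω : ℕ → Fin m) (n : ℕ) : ℂ :=
  (List.range n).foldr (fun k z => (z - b (ω k)) / a (ω k)) 0

/-- The coding map `π(ω) = lim_{n→∞} φ_{ω₁} ∘ ⋯ ∘ φ_{ω_n}(0)`. -/
noncomputable def codingMap {m : ℕ} (a b : Fin m → ℂ) (ω : ℕ → Fin m) : ℂ :=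
  limUnder atTop (affineIter a b ω)

/-- The limit set `J = π(Σ_m)`, i.e. the Julia set of the semigroup `⟨g_1,…,g_m⟩`. -/
noncomputable def limitSet {m : ℕ} (a b : Fin m → ℂ) : Set ℂ :=
  Set.range (codingMap a b)

/-- The transversality condition (TC) for a family of expanding affine systems over `U`:
there is `C₁ > 0` such that for every `r ∈ (0, D]` and all `ω, τ` with distinct first
symbols, `Leb {λ ∈ U : |π_λ(ω) - π_λ(τ)| ≤ r} ≤ C₁ r²`. -/
def TCond {m : ℕ} {E : Type*} [MeasurableSpace E] (μ : Measure E)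
    (U : Set E) (a b : E → Fin m → ℂ) (D : ℝ) : Prop :=
  ∃ C₁ > (0:ℝ), ∀ r ∈ Set.Ioc (0:ℝ) D, ∀ ω τ : ℕ → Fin m, ω 0 ≠ τ 0 →
    μ {l ∈ U | ‖codingMap (a l) (b l) ω - codingMap (a l) (b l) τ‖ ≤ r}
      ≤ ENNReal.ofReal (C₁ * r ^ 2)

/-- The strong transversality condition (STC), with real parameter dimension `d`:
there is `C₁' > 0` such that for every `r ∈ (0, D]` and all `ω, τ` with distinct first
symbols, the set `{λ ∈ U : |π_λ(ω) - π_λ(τ)| ≤ r}` can be covered by at most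
`C₁' r^(2-d)` balls of radius `r`. -/
def STCond {m : ℕ} {E : Type*} [PseudoMetricSpace E]
    (U : Set E) (a b : E → Fin m → ℂ) (D : ℝ) (d : ℝ) : Prop :=
  ∃ C > (0:ℝ), ∀ r ∈ Set.Ioc (0:ℝ) D, ∀ ω τ : ℕ → Fin m, ω 0 ≠ τ 0 →
    ∃ S : Finset E, (S.card : ℝ) ≤ C * r ^ ((2:ℝ) - d) ∧
      {l ∈ U | ‖codingMap (a l) (b l) ω - codingMap (a l) (b l) τ‖ ≤ r}
        ⊆ ⋃ x ∈ S, Metric.closedBall x r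

/-- The analytic transversality condition (ATC) for a holomorphic family of expanding
affine systems: whenever `π_λ(ω) = π_λ(τ)` with `ω₁ ≠ τ₁`, the complex gradient of
`λ ↦ π_λ(ω) - π_λ(τ)` at `λ` is nonzero. -/
def ATCond {m : ℕ} {E : Type*} [NormedAddCommGroup E] [NormedSpace ℂ E]
    (U : Set E) (a b : E → Fin m → ℂ) : Prop :=
  ∀ ω τ : ℕ → Fin m, ω 0 ≠ τ 0 → ∀ l ∈ U,
    codingMap (a l) (b l) ω = codingMap (a l) (b l) τ →
    fderiv ℂ (fun μ => codingMap (a μ) (b μ) ω - codingMap (a μ) (b μ) τ) l ≠ 0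

/-!
Write `ν_λ = (π_λ)_* μ` and
`T_λ(r) = (μ × μ){(ω, τ) : |π_λ ω - π_λ τ| ≤ r} = ∫ ν_λ(B(z, r)) dν_λ(z)`.
If `liminf T_λ(r) / r² < ∞` along `r → 0`, then by Fatou and the Lebesgue differentiation
theorem `∫ (dν_λ/dLeb)² ≤ liminf T_λ(r) / (π r²) < ∞`, while the singular part of `ν_λ` must
vanish because ball ratios blow up on it; and `Leb(J_λ) > 0` since `ν_λ(J_λ) = 1`.

To bound `T_λ(r)` on average over `λ`, split the pairs `(ω, τ)` according to the first index `n`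
where they differ. Since `π(σⁿω) - π(σⁿτ) = a_{ω₀} ⋯ a_{ω_{n-1}} (π ω - π τ)`, transversality
gives `Leb{λ : |π_λ ω - π_λ τ| ≤ r} ≲ r² ∏_{k<n} A_{ω_k}²` on a ball where `|a_i(λ)| ≤ A_i`, and
integrating against the Bernoulli measure yields `∫ T_λ(r) dλ ≲ r² ∑ₙ θⁿ` with
`θ = ∑ᵢ pᵢ² A_i²`. With `pᵢ = |a_i(λ₀)|^{-s}` one has `pᵢ² |a_i(λ₀)|² = pᵢ |a_i(λ₀)|^{2-s} < pᵢ`,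
so `θ < 1` for `A_i` close to `|a_i(λ₀)|` exactly because `s(λ₀) > 2`.
-/

open Topology

section CodingMap

variable {m : ℕ} {a b : Fin m → ℂ} {η B : ℝ}

lemma affineIter_succ (a b : Fin m → ℂ) (ω : ℕ → Fin m) (n : ℕ) :
    affineIter a b ω (n + 1) = (affineIter a b (fun k => ω (k + 1)) n - b (ω 0)) / a (ω 0) := by
  simp [affineIter, List.range_succ_eq_map, List.foldr_map]

lemma affineIter_eq_neg_sum (a b : Fin m → ℂ) (ω : ℕ → Fin m) (n : ℕ) :
    affineIter a b ω n = -∑ k ∈ Finset.range n, b (ω k) / ∏ j ∈ Finset.range (k + 1), a (ω j) := by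
  induction n generalizing ω with
  | zero => simp [affineIter]
  | succ n ih =>
    rw [affineIter_succ, ih, Finset.sum_range_succ']
    simp only [Finset.prod_range_succ' _ (_ + 1), ← div_div]
    rw [sub_div, neg_div, Finset.sum_div]
    simp only [zero_add, Finset.range_one, Finset.prod_singleton, neg_add_rev]
    abel

lemma norm_div_prod_le (hη : 1 < η) (ha : ∀ i, η ≤ ‖a i‖) (hb : ∀ i, ‖b i‖ ≤ B)
    (ω : ℕ → Fin m) (k : ℕ) :
    ‖b (ω k) / ∏ j ∈ Finset.range (k + 1), a (ω j)‖ ≤ B / η * η⁻¹ ^ k := by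
  have hη0 : 0 < η := by linarith
  have hprod : η ^ (k + 1) ≤ ∏ j ∈ Finset.range (k + 1), ‖a (ω j)‖ := by
    simpa using Finset.prod_le_prod (s := Finset.range (k + 1)) (fun _ _ => hη0.le)
      (fun j _ => ha (ω j))
  calc ‖b (ω k) / ∏ j ∈ Finset.range (k + 1), a (ω j)‖ ≤ B / η ^ (k + 1) := by
        rw [norm_div, norm_prod]
        exact div_le_div₀ ((norm_nonneg _).trans (hb (ω k))) (hb _) (by positivity) hprod
    _ = B / η * η⁻¹ ^ k := by rw [inv_pow, pow_succ']; field_simp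

lemma summable_div_mul_inv_pow (hη : 1 < η) (B : ℝ) : Summable fun k : ℕ => B / η * η⁻¹ ^ k :=
  (summable_geometric_of_lt_one (by positivity) (inv_lt_one_of_one_lt₀ hη)).mul_left _

lemma tendsto_affineIter_neg_tsum (hη : 1 < η) (ha : ∀ i, η ≤ ‖a i‖) (hb : ∀ i, ‖b i‖ ≤ B)
    (ω : ℕ → Fin m) : Tendsto (affineIter a b ω) atTop
      (𝓝 (-∑' k, b (ω k) / ∏ j ∈ Finset.range (k + 1), a (ω j))) :=
  ((Summable.of_norm_bounded (summable_div_mul_inv_pow hη B) (norm_div_prod_le hη ha hb ω)).hasSum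
    |>.tendsto_sum_nat.neg).congr fun n => (affineIter_eq_neg_sum a b ω n).symm

lemma codingMap_eq_neg_tsum (hη : 1 < η) (ha : ∀ i, η ≤ ‖a i‖) (hb : ∀ i, ‖b i‖ ≤ B)
    (ω : ℕ → Fin m) :
    codingMap a b ω = -∑' k, b (ω k) / ∏ j ∈ Finset.range (k + 1), a (ω j) :=
  (tendsto_affineIter_neg_tsum hη ha hb ω).limUnder_eq

lemma tendsto_affineIter (hη : 1 < η) (ha : ∀ i, η ≤ ‖a i‖) (hb : ∀ i, ‖b i‖ ≤ B)
    (ω : ℕ → Fin m) : Tendsto (affineIter a b ω) atTop (𝓝 (codingMap a b ω)) := by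
  rw [codingMap_eq_neg_tsum hη ha hb]
  exact tendsto_affineIter_neg_tsum hη ha hb ω

lemma norm_codingMap_le (hη : 1 < η) (ha : ∀ i, η ≤ ‖a i‖) (hb : ∀ i, ‖b i‖ ≤ B)
    (ω : ℕ → Fin m) : ‖codingMap a b ω‖ ≤ B / (η - 1) := by
  have hgeom := (hasSum_geometric_of_lt_one (by positivity) (inv_lt_one_of_one_lt₀ hη)).mul_left
    (B / η)
  have hsum : B / η * (1 - η⁻¹)⁻¹ = B / (η - 1) := by
    have hη0 : η ≠ 0 := by positivity
    have hη1 : η - 1 ≠ 0 := by linarith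
    rw [show 1 - η⁻¹ = (η - 1) / η by field_simp]
    field_simp
  rw [hsum] at hgeom
  rw [codingMap_eq_neg_tsum hη ha hb, norm_neg]
  exact tsum_of_norm_bounded hgeom (norm_div_prod_le hη ha hb ω)

lemma codingMap_shift (hη : 1 < η) (ha : ∀ i, η ≤ ‖a i‖) (hb : ∀ i, ‖b i‖ ≤ B)
    (ω : ℕ → Fin m) :
    codingMap a b (fun k => ω (k + 1)) = a (ω 0) * codingMap a b ω + b (ω 0) := by
  have ha0 : a (ω 0) ≠ 0 := norm_pos_iff.1 (by linarith [ha (ω 0)])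
  have h := ((tendsto_affineIter hη ha hb ω).comp (tendsto_add_atTop_nat 1)).const_mul (a (ω 0))
    |>.add_const (b (ω 0))
  refine tendsto_nhds_unique (tendsto_affineIter hη ha hb _) (h.congr fun n => ?_)
  simp only [Function.comp_apply, affineIter_succ]
  rw [mul_div_cancel₀ _ ha0, sub_add_cancel]

lemma codingMap_sub_shift (hη : 1 < η) (ha : ∀ i, η ≤ ‖a i‖) (hb : ∀ i, ‖b i‖ ≤ B)
    {ω τ : ℕ → Fin m} {n : ℕ} (hωτ : ∀ k < n, ω k = τ k) :
    codingMap a b (fun k => ω (k + n)) - codingMap a b (fun k => τ (k + n))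
      = (∏ k ∈ Finset.range n, a (ω k)) * (codingMap a b ω - codingMap a b τ) := by
  induction n with
  | zero => simp
  | succ n ih =>
    have hshift (ξ : ℕ → Fin m) :
        (fun k => ξ (k + (n + 1))) = fun k => ξ (k + 1 + n) := by
      funext k; rw [add_right_comm, add_assoc]
    rw [hshift, hshift, codingMap_shift hη ha hb (fun j => ω (j + n)),
      codingMap_shift hη ha hb (fun j => τ (j + n)), Finset.prod_range_succ]
    simp only [zero_add, hωτ n (by omega)]
    linear_combination a (τ n) * ih fun k hk => hωτ k (by omega)

end CodingMap

section Family

variable {m : ℕ} {E : Type*} [TopologicalSpace E] {U V : Set E} {a b : E → Fin m → ℂ} {η B : ℝ}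

/-- A continuous expanding affine family `(a_i(λ) z + b_i(λ))ᵢ` over `U`. -/
structure IsExpandingAffineFamily (U : Set E) (a b : E → Fin m → ℂ) (η B : ℝ) : Prop where
  one_lt : 1 < η
  le_norm_a : ∀ l ∈ U, ∀ i, η ≤ ‖a l i‖
  norm_b_le : ∀ l ∈ U, ∀ i, ‖b l i‖ ≤ B
  continuousOn_a : ∀ i, ContinuousOn (fun l => a l i) U
  continuousOn_b : ∀ i, ContinuousOn (fun l => b l i) U

lemma continuousOn_apply_apply_uncurry {g : E → Fin m → ℂ}
    (hg : ∀ i, ContinuousOn (fun l => g l i) U) (k : ℕ) :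
    ContinuousOn (fun x : E × (ℕ → Fin m) => g x.1 (x.2 k)) (U ×ˢ univ) := by
  have heval : Continuous fun p : Fin m × (Fin m → ℂ) => p.2 p.1 :=
    continuous_prod_of_discrete_left.2 fun i => continuous_apply i
  have hpair : ContinuousOn (fun x : E × (ℕ → Fin m) => (x.2 k, g x.1)) (U ×ˢ univ) :=
    ((continuous_apply k).comp continuous_snd).continuousOn.prodMk
      ((continuousOn_pi.2 hg).comp continuousOn_fst fun x hx => hx.1)
  exact heval.comp_continuousOn hpair

theorem IsExpandingAffineFamily.continuousOn_codingMap (hF : IsExpandingAffineFamily U a b η B) :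
    ContinuousOn (fun x : E × (ℕ → Fin m) => codingMap (a x.1) (b x.1) x.2) (U ×ˢ univ) := by
  have hη := hF.one_lt
  refine ContinuousOn.congr (f := fun x =>
      -∑' k, b x.1 (x.2 k) / ∏ j ∈ Finset.range (k + 1), a x.1 (x.2 j)) ?_
    fun x hx => codingMap_eq_neg_tsum hη (hF.le_norm_a _ hx.1) (hF.norm_b_le _ hx.1) _
  refine (continuousOn_tsum (fun k => ?_) (summable_div_mul_inv_pow hη B)
    fun k x hx => norm_div_prod_le hη (hF.le_norm_a _ hx.1) (hF.norm_b_le _ hx.1) x.2 k).neg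
  refine (continuousOn_apply_apply_uncurry hF.continuousOn_b k).div
    (continuousOn_finsetProd _ fun j _ => continuousOn_apply_apply_uncurry hF.continuousOn_a j)
    fun x hx => ?_
  exact Finset.prod_ne_zero_iff.2 fun j _ =>
    norm_pos_iff.1 (by linarith [hF.le_norm_a _ hx.1 (x.2 j)])

lemma continuous_codingMap {a b : Fin m → ℂ} (hη : 1 < η) (ha : ∀ i, η ≤ ‖a i‖)
    (hb : ∀ i, ‖b i‖ ≤ B) : Continuous (codingMap a b) := by
  have hF : IsExpandingAffineFamily (univ : Set Unit) (fun _ => a) (fun _ => b) η B :=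
    ⟨hη, fun _ _ => ha, fun _ _ => hb, fun _ => continuousOn_const, fun _ => continuousOn_const⟩
  exact ContinuousOn.comp_continuous (g := fun x : Unit × (ℕ → Fin m) => codingMap a b x.2)
    (f := fun ω => ((), ω)) hF.continuousOn_codingMap (by fun_prop) fun _ => ⟨trivial, trivial⟩

variable [MeasurableSpace E] [OpensMeasurableSpace E]

lemma IsExpandingAffineFamily.measurableSet_setOf_norm_codingMap_sub_le
    (hF : IsExpandingAffineFamily U a b η B) (hVo : IsOpen V) (hVU : V ⊆ U) (r : ℝ) :
    MeasurableSet {x : E × ((ℕ → Fin m) × (ℕ → Fin m)) |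
      x.1 ∈ V ∧ ‖codingMap (a x.1) (b x.1) x.2.1 - codingMap (a x.1) (b x.1) x.2.2‖ ≤ r} := by
  have hmaps (j : (ℕ → Fin m) × (ℕ → Fin m) → ℕ → Fin m) (hj : Continuous j) :
      ContinuousOn (fun x : E × ((ℕ → Fin m) × (ℕ → Fin m)) =>
        codingMap (a x.1) (b x.1) (j x.2)) (V ×ˢ univ) := by
    have hcont : Continuous fun x : E × ((ℕ → Fin m) × (ℕ → Fin m)) => (x.1, j x.2) := by
      fun_prop
    exact ContinuousOn.comp (g := fun y : E × (ℕ → Fin m) => codingMap (a y.1) (b y.1) y.2)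
      (f := fun x : E × ((ℕ → Fin m) × (ℕ → Fin m)) => (x.1, j x.2)) hF.continuousOn_codingMap
      hcont.continuousOn fun x hx => ⟨hVU hx.1, trivial⟩
  have hf := ((hmaps _ continuous_fst).sub (hmaps _ continuous_snd)).norm
  have hO : IsOpen (V ×ˢ (univ : Set ((ℕ → Fin m) × (ℕ → Fin m)))) := hVo.prod isOpen_univ
  convert hO.measurableSet.diff
    (hf.isOpen_inter_preimage hO (isOpen_Ioi (a := r))).measurableSet using 1
  ext x
  simp only [mem_ofPred_eq, Set.mem_sdiff, mem_prod, mem_univ, and_true, mem_inter_iff,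
    mem_preimage, mem_Ioi, not_and, not_lt, Pi.sub_apply]
  tauto

end Family

section SequencePairs

variable {α : Type*}

def agreeUpTo (n : ℕ) : Set ((ℕ → α) × (ℕ → α)) := {pq | ∀ k < n, pq.1 k = pq.2 k}

def firstDiffAt (n : ℕ) : Set ((ℕ → α) × (ℕ → α)) :=
  {pq | (∀ k < n, pq.1 k = pq.2 k) ∧ pq.1 n ≠ pq.2 n}

lemma pairwise_disjoint_firstDiffAt :
    Pairwise (Function.onFun Disjoint (firstDiffAt (α := α))) := by
  have key {n n' : ℕ} (h : n < n') : Disjoint (firstDiffAt (α := α) n) (firstDiffAt n') :=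
    Set.disjoint_left.2 fun _ hn hn' => hn.2 (hn'.1 n h)
  intro n n' hne
  rcases hne.lt_or_gt with h | h
  exacts [key h, (key h).symm]

lemma iUnion_firstDiffAt : ⋃ n, firstDiffAt (α := α) n = (diagonal (ℕ → α))ᶜ := by
  classical
  ext pq
  simp only [mem_iUnion, firstDiffAt, mem_ofPred_eq, mem_compl_iff, mem_diagonal_iff]
  constructor
  · rintro ⟨n, -, hn⟩ heq
    exact hn (congrFun heq n)
  · intro hne
    have hex : ∃ k, pq.1 k ≠ pq.2 k := Function.ne_iff.1 hne
    exact ⟨Nat.find hex, fun k hk => not_not.1 (Nat.find_min hex hk), Nat.find_spec hex⟩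

variable [MeasurableSpace α] [DiscreteMeasurableSpace α] [Countable α]

lemma measurableSet_agreeUpTo (n : ℕ) : MeasurableSet (agreeUpTo (α := α) n) := by
  simp only [agreeUpTo, ofPred_forall]
  exact .biInter (to_countable _) fun k _ => measurableSet_eq_fun
    ((measurable_pi_apply k).comp measurable_fst) ((measurable_pi_apply k).comp measurable_snd)

lemma measurableSet_firstDiffAt (n : ℕ) : MeasurableSet (firstDiffAt (α := α) n) :=
  (measurableSet_agreeUpTo n).inter (measurableSet_eq_fun ((measurable_pi_apply n).comp
    measurable_fst) ((measurable_pi_apply n).comp measurable_snd)).compl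

lemma lintegral_eq_tsum_setLIntegral_firstDiffAt {ν : Measure ((ℕ → α) × (ℕ → α))}
    (hν : ν (diagonal (ℕ → α)) = 0) (f : (ℕ → α) × (ℕ → α) → ℝ≥0∞) :
    ∫⁻ pq, f pq ∂ν = ∑' n, ∫⁻ pq in firstDiffAt n, f pq ∂ν := by
  rw [← lintegral_iUnion measurableSet_firstDiffAt pairwise_disjoint_firstDiffAt,
    iUnion_firstDiffAt, Measure.restrict_eq_self_of_ae_mem (s := (diagonal _)ᶜ)
      (compl_mem_ae_iff.2 hν)]

end SequencePairs

section Bernoulli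

variable {α : Type*} [Fintype α] [Nonempty α] [MeasurableSpace α] [DiscreteMeasurableSpace α]
  {μ : Measure (ℕ → α)} [SFinite μ] {p : α → ℝ≥0∞}

lemma setLIntegral_agreeUpTo_prod
    (hμ : ∀ n (c : ℕ → α), μ {ω | ∀ k < n, ω k = c k} = ∏ k ∈ Finset.range n, p (c k))
    (t : α → ℝ≥0∞) (n : ℕ) :
    ∫⁻ pq in agreeUpTo n, ∏ k ∈ Finset.range n, t (pq.1 k) ∂μ.prod μ
      = (∑ i, t i * p i ^ 2) ^ n := by
  classical
  -- `ext w` pads the word `w` to a sequence, so that `hμ` applies to the cylinder `cyl w`.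
  let ext (w : Fin n → α) (k : ℕ) : α := if h : k < n then w ⟨k, h⟩ else Classical.arbitrary α
  let cyl (w : Fin n → α) : Set (ℕ → α) := {ω | ∀ k < n, ω k = ext w k}
  have hext (w : Fin n → α) (k : Fin n) : ext w k = w k := by simp [ext]
  have hdecomp : agreeUpTo n = ⋃ w, cyl w ×ˢ cyl w := by
    ext pq
    simp only [agreeUpTo, mem_iUnion, mem_prod, cyl, mem_ofPred_eq]
    constructor
    · intro h
      refine ⟨fun k => pq.1 k, fun k hk => by simp [ext, hk], fun k hk => by simp [ext, hk, h k hk]⟩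
    · rintro ⟨w, h1, h2⟩ k hk
      rw [h1 k hk, h2 k hk]
  have hdisj : Pairwise (Function.onFun Disjoint fun w => cyl w ×ˢ cyl w) := by
    intro w w' hne
    obtain ⟨k, hk⟩ := Function.ne_iff.1 hne
    refine Set.disjoint_left.2 fun pq h h' => hk ?_
    rw [← hext w k, ← hext w' k, ← h.1 k k.2, ← h'.1 k k.2]
  have hcyl_meas (w : Fin n → α) : MeasurableSet (cyl w) := by
    simp only [cyl, ofPred_forall]
    exact .biInter (to_countable _) fun k _ => measurable_pi_apply k (measurableSet_singleton _)
  have hval (w : Fin n → α) : ∫⁻ pq in cyl w ×ˢ cyl w, ∏ k ∈ Finset.range n, t (pq.1 k) ∂μ.prod μ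
      = ∏ k, t (w k) * p (w k) ^ 2 := by
    rw [setLIntegral_congr_fun ((hcyl_meas w).prod (hcyl_meas w))
      (g := fun _ => ∏ k ∈ Finset.range n, t (ext w k)) fun pq hpq =>
        Finset.prod_congr rfl fun k hk => by rw [hpq.1 k (Finset.mem_range.1 hk)],
      setLIntegral_const, Measure.prod_prod, hμ, ← Fin.prod_univ_eq_prod_range,
      ← Fin.prod_univ_eq_prod_range (fun k => p (ext w k)), ← sq, ← Finset.prod_pow,
      ← Finset.prod_mul_distrib]
    simp only [hext]
  rw [hdecomp, lintegral_iUnion (fun w => (hcyl_meas w).prod (hcyl_meas w)) hdisj, tsum_fintype]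
  simp only [hval]
  rw [← Fintype.prod_sum (fun (_ : Fin n) i => t i * p i ^ 2), Finset.prod_const,
    Finset.card_univ, Fintype.card_fin]

lemma measure_prod_diagonal_eq_zero
    (hμ : ∀ n (c : ℕ → α), μ {ω | ∀ k < n, ω k = c k} = ∏ k ∈ Finset.range n, p (c k))
    (hp : ∑ i, p i ^ 2 < 1) : μ.prod μ (diagonal (ℕ → α)) = 0 := by
  refine le_antisymm (ge_of_tendsto' (ENNReal.tendsto_pow_atTop_nhds_zero_of_lt_one hp)
    fun n => ?_) bot_le
  calc μ.prod μ (diagonal _) ≤ μ.prod μ (agreeUpTo n) := measure_mono fun pq h k _ => congrFun h k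
    _ = (∑ i, p i ^ 2) ^ n := by
      simpa using setLIntegral_agreeUpTo_prod hμ (fun _ => 1) n

end Bernoulli

section BallDensity

variable {E : Type*} [MetricSpace E] [MeasurableSpace E] [BorelSpace E] [SecondCountableTopology E]
  {u : ℕ → ℝ}

lemma measurable_measure_closedBall (ν : Measure E) [SFinite ν] (r : ℝ) :
    Measurable fun z => ν (closedBall z r) :=
  measurable_measure_prodMk_left (s := {p : E × E | dist p.2 p.1 ≤ r})
    (measurableSet_le (by fun_prop) measurable_const)

noncomputable def lowerBallDensity (ν μ : Measure E) (u : ℕ → ℝ) (z : E) : ℝ≥0∞ :=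
  liminf (fun n => ν (closedBall z (u n)) / μ (closedBall z (u n))) atTop

lemma measurable_lowerBallDensity (ν μ : Measure E) [SFinite ν] [SFinite μ] (u : ℕ → ℝ) :
    Measurable (lowerBallDensity ν μ u) :=
  .liminf fun _ => (measurable_measure_closedBall ν _).div (measurable_measure_closedBall μ _)

variable [HasBesicovitchCovering E]

lemma tendsto_nhdsGT_of_pos (hu : ∀ n, 0 < u n) (hu0 : Tendsto u atTop (𝓝 0)) :
    Tendsto u atTop (𝓝[>] 0) :=
  tendsto_nhdsWithin_iff.2 ⟨hu0, .of_forall hu⟩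

lemma lowerBallDensity_ae_eq_rnDeriv (ν μ : Measure E) [IsLocallyFiniteMeasure ν]
    [IsLocallyFiniteMeasure μ] (hu : ∀ n, 0 < u n) (hu0 : Tendsto u atTop (𝓝 0)) :
    ∀ᵐ z ∂μ, lowerBallDensity ν μ u z = ν.rnDeriv μ z := by
  filter_upwards [Besicovitch.ae_tendsto_rnDeriv ν μ] with z hz
  exact (hz.comp (tendsto_nhdsGT_of_pos hu hu0)).liminf_eq

/-- At points seen by the singular part, the ball ratio blows up: apply the differentiation theorem
to `μ` with respect to the Besicovitch Vitali family of `ν.singularPart μ`. -/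
lemma lowerBallDensity_ae_eq_top_singularPart (ν μ : Measure E) [IsFiniteMeasure ν]
    [IsLocallyFiniteMeasure μ] [μ.IsOpenPosMeasure] (hu : ∀ n, 0 < u n)
    (hu0 : Tendsto u atTop (𝓝 0)) :
    ∀ᵐ z ∂ν.singularPart μ, lowerBallDensity ν μ u z = ⊤ := by
  set ρ := ν.singularPart μ
  filter_upwards [(Besicovitch.vitaliFamily ρ).ae_eventually_measure_zero_of_singular
    (ν.mutuallySingular_singularPart μ).symm] with z hz
  have hlim : Tendsto (fun n => μ (closedBall z (u n)) / ρ (closedBall z (u n))) atTop (𝓝 0) :=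
    (hz.comp (Besicovitch.tendsto_filterAt ρ z)).comp (tendsto_nhdsGT_of_pos hu hu0)
  have hρ : Tendsto (fun n => ρ (closedBall z (u n)) / μ (closedBall z (u n))) atTop (𝓝 ⊤) := by
    have hinv := tendsto_inv_iff.2 hlim
    rw [ENNReal.inv_zero] at hinv
    refine hinv.congr fun n => ?_
    exact ENNReal.inv_div (.inl (measure_ne_top _ _))
      (.inr (measure_closedBall_pos μ z (hu n)).ne')
  exact (tendsto_nhds_top_mono' hρ fun n =>
    ENNReal.div_le_div_right (Measure.singularPart_le ν μ _) _).liminf_eq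

theorem absolutelyContinuous_of_ae_lowerBallDensity_lt_top (ν μ : Measure E) [IsFiniteMeasure ν]
    [IsLocallyFiniteMeasure μ] [μ.IsOpenPosMeasure] (hu : ∀ n, 0 < u n)
    (hu0 : Tendsto u atTop (𝓝 0)) (h : ∀ᵐ z ∂ν, lowerBallDensity ν μ u z < ⊤) : ν ≪ μ := by
  rw [← Measure.singularPart_eq_zero, ← ae_eq_bot, ← eventually_false_iff_eq_bot]
  filter_upwards [Measure.absolutelyContinuous_of_le (Measure.singularPart_le ν μ) h,
    lowerBallDensity_ae_eq_top_singularPart ν μ hu hu0] with z hlt htop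
  exact hlt.ne htop

lemma lintegral_rnDeriv_sq_eq_lintegral_lowerBallDensity {ν μ : Measure E} [IsFiniteMeasure ν]
    [IsLocallyFiniteMeasure μ] (hac : ν ≪ μ) (hu : ∀ n, 0 < u n)
    (hu0 : Tendsto u atTop (𝓝 0)) :
    ∫⁻ z, ν.rnDeriv μ z ^ 2 ∂μ = ∫⁻ z, lowerBallDensity ν μ u z ∂ν := by
  calc ∫⁻ z, ν.rnDeriv μ z ^ 2 ∂μ = ∫⁻ z, (ν.rnDeriv μ * lowerBallDensity ν μ u) z ∂μ := by
        refine lintegral_congr_ae ?_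
        filter_upwards [lowerBallDensity_ae_eq_rnDeriv ν μ hu hu0] with z hz
        simp [hz, sq]
    _ = ∫⁻ z, lowerBallDensity ν μ u z ∂μ.withDensity (ν.rnDeriv μ) :=
        (lintegral_withDensity_eq_lintegral_mul μ (Measure.measurable_rnDeriv ν μ)
          (measurable_lowerBallDensity ν μ u)).symm
    _ = ∫⁻ z, lowerBallDensity ν μ u z ∂ν := by rw [Measure.withDensity_rnDeriv_eq ν μ hac]

end BallDensity

lemma memLp_two_toReal_of_lintegral_sq_ne_top {X : Type*} [MeasurableSpace X] {μ : Measure X}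
    {f : X → ℝ≥0∞} (hf : AEMeasurable f μ) (h : ∫⁻ x, f x ^ 2 ∂μ ≠ ⊤) :
    MemLp (fun x => (f x).toReal) 2 μ := by
  refine (memLp_two_iff_integrable_sq hf.ennreal_toReal.aestronglyMeasurable).2 ?_
  simpa only [ENNReal.toReal_pow] using integrable_toReal_of_lintegral_ne_top (hf.pow_const 2) h

theorem absolutelyContinuous_and_memLp_two_of_liminf_lt_top {E : Type*} [NormedAddCommGroup E]
    [NormedSpace ℝ E] [FiniteDimensional ℝ E] [MeasurableSpace E] [BorelSpace E]
    (μ : Measure E) [μ.IsAddHaarMeasure] (ν : Measure E) [IsFiniteMeasure ν] {u : ℕ → ℝ}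
    (hu : ∀ n, 0 < u n) (hu0 : Tendsto u atTop (𝓝 0))
    (h : liminf (fun n => (∫⁻ z, ν (closedBall z (u n)) ∂ν) / μ (closedBall 0 (u n))) atTop < ⊤) :
    ν ≪ μ ∧ MemLp (fun z => (ν.rnDeriv μ z).toReal) 2 μ := by
  have hW : ∫⁻ z, lowerBallDensity ν μ u z ∂ν < ⊤ := by
    refine (lintegral_liminf_le fun n =>
      (measurable_measure_closedBall ν _).div (measurable_measure_closedBall μ _)).trans_lt ?_
    simpa only [Pi.div_apply, Measure.addHaar_closedBall_center, div_eq_mul_inv,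
      lintegral_mul_const _ (measurable_measure_closedBall ν _)] using h
  have hac := absolutelyContinuous_of_ae_lowerBallDensity_lt_top ν μ hu hu0
    (ae_lt_top (measurable_lowerBallDensity ν μ u) hW.ne)
  refine ⟨hac, memLp_two_toReal_of_lintegral_sq_ne_top
    (Measure.measurable_rnDeriv ν μ).aemeasurable ?_⟩
  rw [lintegral_rnDeriv_sq_eq_lintegral_lowerBallDensity hac hu hu0]
  exact hW.ne

lemma ae_liminf_lt_top_of_lintegral_le {X : Type*} [MeasurableSpace X] {μ : Measure X}
    {f : ℕ → X → ℝ≥0∞} (hf : ∀ n, Measurable (f n)) {K : ℝ≥0∞} (hK : K ≠ ⊤)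
    (h : ∀ n, ∫⁻ x, f n x ∂μ ≤ K) : ∀ᵐ x ∂μ, liminf (fun n => f n x) atTop < ⊤ :=
  ae_lt_top (.liminf hf) ((lintegral_liminf_le hf).trans_lt
    ((liminf_le_of_frequently_le' (.of_forall h)).trans_lt hK.lt_top)).ne

lemma measure_prod_setOf_dist_le_eq_lintegral_map {X F : Type*} [MeasurableSpace X]
    [MetricSpace F] [MeasurableSpace F] [BorelSpace F] [SecondCountableTopology F]
    (μ : Measure X) [SFinite μ] {f : X → F} (hf : Measurable f) (r : ℝ) :
    μ.prod μ {pq | dist (f pq.1) (f pq.2) ≤ r} = ∫⁻ z, μ.map f (closedBall z r) ∂μ.map f := by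
  have hS : MeasurableSet {pq : X × X | dist (f pq.1) (f pq.2) ≤ r} :=
    measurableSet_le ((hf.comp measurable_fst).dist (hf.comp measurable_snd)) measurable_const
  rw [Measure.prod_apply hS, lintegral_map (measurable_measure_closedBall _ r) hf]
  refine lintegral_congr fun ω => ?_
  rw [Measure.map_apply hf measurableSet_closedBall]
  congr 1
  ext τ
  simp [dist_comm]

section SingleSystem

variable {m : ℕ} {a b : Fin m → ℂ} {η B : ℝ}

theorem absolutelyContinuous_memLp_volume_limitSet_pos (hη : 1 < η) (ha : ∀ i, η ≤ ‖a i‖)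
    (hb : ∀ i, ‖b i‖ ≤ B) (μ : Measure (ℕ → Fin m)) [IsProbabilityMeasure μ] {u : ℕ → ℝ}
    (hu : ∀ n, 0 < u n) (hu0 : Tendsto u atTop (𝓝 0))
    (h : liminf (fun n => μ.prod μ {pq | ‖codingMap a b pq.1 - codingMap a b pq.2‖ ≤ u n}
      / volume (closedBall (0 : ℂ) (u n))) atTop < ⊤) :
    μ.map (codingMap a b) ≪ volume ∧
      MemLp (fun z => ((μ.map (codingMap a b)).rnDeriv volume z).toReal) 2 volume ∧
      0 < volume (limitSet a b) := by
  have hπ := continuous_codingMap hη ha hb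
  obtain ⟨hac, hL2⟩ := absolutelyContinuous_and_memLp_two_of_liminf_lt_top volume
    (μ.map (codingMap a b)) hu hu0 (by
      simpa only [← measure_prod_setOf_dist_le_eq_lintegral_map μ hπ.measurable, dist_eq_norm]
        using h)
  refine ⟨hac, hL2, pos_iff_ne_zero.2 fun hJ => (one_ne_zero : (1 : ℝ≥0∞) ≠ 0) ?_⟩
  have hJ' := hac hJ
  rwa [limitSet, Measure.map_apply hπ.measurable (isCompact_range hπ).measurableSet,
    preimage_range, measure_univ] at hJ'

end SingleSystem

section TransversalFamily

variable {m : ℕ} {E : Type*} [MeasurableSpace E] {vol : Measure E}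
  {U V : Set E} {a b : E → Fin m → ℂ} {η B C : ℝ}

/-- By `codingMap_sub_shift`, a pair first differing at `n` is rescaled to a pair with distinct
first symbols, to which transversality applies at scale `∏ A · r`. -/
lemma measure_setOf_norm_codingMap_sub_le (hη : 1 < η) (haη : ∀ l ∈ U, ∀ i, η ≤ ‖a l i‖)
    (hbB : ∀ l ∈ U, ∀ i, ‖b l i‖ ≤ B) (hC : 0 ≤ C)
    (hTC : ∀ r ∈ Ioc 0 (2 * B / (η - 1)), ∀ ω τ : ℕ → Fin m, ω 0 ≠ τ 0 →
      vol {l ∈ U | ‖codingMap (a l) (b l) ω - codingMap (a l) (b l) τ‖ ≤ r}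
        ≤ ENNReal.ofReal (C * r ^ 2))
    (hVU : V ⊆ U) {A : Fin m → ℝ} (hA : ∀ l ∈ V, ∀ i, ‖a l i‖ ≤ A i)
    {r : ℝ} (hr : r ∈ Ioc 0 (2 * B / (η - 1))) {n : ℕ} {pq : (ℕ → Fin m) × (ℕ → Fin m)}
    (hpq : pq ∈ firstDiffAt n) :
    vol {l ∈ V | ‖codingMap (a l) (b l) pq.1 - codingMap (a l) (b l) pq.2‖ ≤ r}
      ≤ ENNReal.ofReal (C * r ^ 2) * ∏ k ∈ Finset.range n, ENNReal.ofReal (A (pq.1 k) ^ 2) := by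
  set S := {l ∈ V | ‖codingMap (a l) (b l) pq.1 - codingMap (a l) (b l) pq.2‖ ≤ r}
  rcases S.eq_empty_or_nonempty with hS | ⟨l₁, hl₁⟩
  · simp [hS]
  have hA_pos (i : Fin m) : 0 < A i := by linarith [haη l₁ (hVU hl₁.1) i, hA l₁ hl₁.1 i]
  set P := ∏ k ∈ Finset.range n, A (pq.1 k)
  have hP : 0 < P := Finset.prod_pos fun k _ => hA_pos _
  set D := 2 * B / (η - 1)
  have hsub : S ⊆ {l ∈ U | ‖codingMap (a l) (b l) (fun k => pq.1 (k + n))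
      - codingMap (a l) (b l) (fun k => pq.2 (k + n))‖ ≤ min (P * r) D} := by
    rintro l ⟨hlV, hlr⟩
    have hlU := hVU hlV
    refine ⟨hlU, le_min ?_ ?_⟩
    · rw [codingMap_sub_shift hη (haη l hlU) (hbB l hlU) hpq.1, norm_mul, norm_prod]
      exact mul_le_mul (Finset.prod_le_prod (fun _ _ => norm_nonneg _) fun k _ => hA l hlV _)
        hlr (norm_nonneg _) hP.le
    · have h1 := norm_codingMap_le hη (haη l hlU) (hbB l hlU) fun k => pq.1 (k + n)
      have h2 := norm_codingMap_le hη (haη l hlU) (hbB l hlU) fun k => pq.2 (k + n)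
      calc _ ≤ _ := norm_sub_le _ _
        _ ≤ B / (η - 1) + B / (η - 1) := add_le_add h1 h2
        _ = D := by ring
  have hmin : min (P * r) D ∈ Ioc 0 D := ⟨lt_min (by nlinarith [hr.1]) (hr.1.trans_le hr.2),
    min_le_right _ _⟩
  calc vol S ≤ ENNReal.ofReal (C * min (P * r) D ^ 2) :=
        (measure_mono hsub).trans (hTC _ hmin _ _ (by simpa using hpq.2))
    _ ≤ ENNReal.ofReal (C * r ^ 2 * P ^ 2) := by
        refine ENNReal.ofReal_le_ofReal ?_
        have := pow_le_pow_left₀ hmin.1.le (min_le_left (P * r) D) 2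
        nlinarith
    _ = _ := by
        rw [ENNReal.ofReal_mul (by positivity), ← Finset.prod_pow,
          ENNReal.ofReal_prod_of_nonneg fun k _ => by positivity]

variable [TopologicalSpace E] [OpensMeasurableSpace E]

theorem setLIntegral_measure_prod_setOf_norm_codingMap_sub_le [NeZero m] [SFinite vol]
    (hF : IsExpandingAffineFamily U a b η B) (hC : 0 ≤ C)
    (hTC : ∀ r ∈ Ioc 0 (2 * B / (η - 1)), ∀ ω τ : ℕ → Fin m, ω 0 ≠ τ 0 →
      vol {l ∈ U | ‖codingMap (a l) (b l) ω - codingMap (a l) (b l) τ‖ ≤ r}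
        ≤ ENNReal.ofReal (C * r ^ 2))
    (hVo : IsOpen V) (hVU : V ⊆ U) {A : Fin m → ℝ} (hA : ∀ l ∈ V, ∀ i, ‖a l i‖ ≤ A i)
    {μ : Measure (ℕ → Fin m)} [SFinite μ] {p : Fin m → ℝ≥0∞}
    (hμ : ∀ n (c : ℕ → Fin m), μ {ω | ∀ k < n, ω k = c k} = ∏ k ∈ Finset.range n, p (c k))
    (hdiag : μ.prod μ (diagonal (ℕ → Fin m)) = 0) {r : ℝ} (hr : r ∈ Ioc 0 (2 * B / (η - 1))) :
    ∫⁻ l in V, μ.prod μ {pq | ‖codingMap (a l) (b l) pq.1 - codingMap (a l) (b l) pq.2‖ ≤ r} ∂vol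
      ≤ ENNReal.ofReal (C * r ^ 2) * (1 - ∑ i, ENNReal.ofReal (A i ^ 2) * p i ^ 2)⁻¹ := by
  have hS := hF.measurableSet_setOf_norm_codingMap_sub_le hVo hVU r
  set S := {x : E × ((ℕ → Fin m) × (ℕ → Fin m)) |
    x.1 ∈ V ∧ ‖codingMap (a x.1) (b x.1) x.2.1 - codingMap (a x.1) (b x.1) x.2.2‖ ≤ r}
  have hslice (n : ℕ) :
      ∫⁻ pq in firstDiffAt n,
        vol {l ∈ V | ‖codingMap (a l) (b l) pq.1 - codingMap (a l) (b l) pq.2‖ ≤ r} ∂μ.prod μ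
      ≤ ENNReal.ofReal (C * r ^ 2) * (∑ i, ENNReal.ofReal (A i ^ 2) * p i ^ 2) ^ n :=
    calc _ ≤ ∫⁻ pq in firstDiffAt n, ENNReal.ofReal (C * r ^ 2) *
          ∏ k ∈ Finset.range n, ENNReal.ofReal (A (pq.1 k) ^ 2) ∂μ.prod μ :=
          setLIntegral_mono' (measurableSet_firstDiffAt n) fun pq hpq =>
            measure_setOf_norm_codingMap_sub_le hF.one_lt hF.le_norm_a hF.norm_b_le hC hTC hVU hA
              hr hpq
      _ ≤ ∫⁻ pq in agreeUpTo n, ENNReal.ofReal (C * r ^ 2) *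
          ∏ k ∈ Finset.range n, ENNReal.ofReal (A (pq.1 k) ^ 2) ∂μ.prod μ :=
          lintegral_mono_set fun pq hpq => hpq.1
      _ = _ := by
          rw [lintegral_const_mul' _ _ ofReal_ne_top,
            setLIntegral_agreeUpTo_prod hμ (fun i => ENNReal.ofReal (A i ^ 2)) n]
  calc _ = (vol.restrict V).prod (μ.prod μ) S := by
        rw [Measure.prod_apply hS]
        refine setLIntegral_congr_fun hVo.measurableSet fun l hl => ?_
        simp [S, hl]
    _ = ∫⁻ pq, vol {l ∈ V | ‖codingMap (a l) (b l) pq.1 - codingMap (a l) (b l) pq.2‖ ≤ r}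
          ∂μ.prod μ := by
        rw [Measure.prod_apply_symm hS]
        refine lintegral_congr fun pq => ?_
        rw [Measure.restrict_apply (measurable_prodMk_right hS)]
        congr 1
        ext l
        simp [S, and_comm]
    _ = _ := lintegral_eq_tsum_setLIntegral_firstDiffAt hdiag _
    _ ≤ ∑' n, ENNReal.ofReal (C * r ^ 2) * (∑ i, ENNReal.ofReal (A i ^ 2) * p i ^ 2) ^ n :=
        ENNReal.tsum_le_tsum hslice
    _ = _ := by rw [ENNReal.tsum_mul_left, ENNReal.tsum_geometric]

theorem ae_liminf_measure_prod_div_volume_lt_top [NeZero m] [SFinite vol]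
    (hF : IsExpandingAffineFamily U a b η B) (hTC : TCond vol U a b (2 * B / (η - 1)))
    (hVo : IsOpen V) (hVU : V ⊆ U) {A : Fin m → ℝ} (hA : ∀ l ∈ V, ∀ i, ‖a l i‖ ≤ A i)
    {μ : Measure (ℕ → Fin m)} [SFinite μ] {p : Fin m → ℝ≥0∞}
    (hμ : ∀ n (c : ℕ → Fin m), μ {ω | ∀ k < n, ω k = c k} = ∏ k ∈ Finset.range n, p (c k))
    (hdiag : μ.prod μ (diagonal (ℕ → Fin m)) = 0)
    (hθ : ∑ i, ENNReal.ofReal (A i ^ 2) * p i ^ 2 < 1)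
    {u : ℕ → ℝ} (hu : ∀ n, u n ∈ Ioc 0 (2 * B / (η - 1))) :
    ∀ᵐ l ∂vol.restrict V, liminf (fun n =>
      μ.prod μ {pq | ‖codingMap (a l) (b l) pq.1 - codingMap (a l) (b l) pq.2‖ ≤ u n}
        / volume (closedBall (0 : ℂ) (u n))) atTop < ⊤ := by
  obtain ⟨C, hC, hTC⟩ := hTC
  set θ := ∑ i, ENNReal.ofReal (A i ^ 2) * p i ^ 2
  set S : ℕ → Set (E × ((ℕ → Fin m) × (ℕ → Fin m))) := fun n => {x | x.1 ∈ V ∧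
    ‖codingMap (a x.1) (b x.1) x.2.1 - codingMap (a x.1) (b x.1) x.2.2‖ ≤ u n}
  have hS (n : ℕ) : MeasurableSet (S n) :=
    hF.measurableSet_setOf_norm_codingMap_sub_le hVo hVU (u n)
  have hslice {l : E} (hl : l ∈ V) (n : ℕ) : Prod.mk l ⁻¹' S n
      = {pq | ‖codingMap (a l) (b l) pq.1 - codingMap (a l) (b l) pq.2‖ ≤ u n} := by
    ext pq
    simp [S, hl]
  have hK : ENNReal.ofReal C * (1 - θ)⁻¹ / NNReal.pi ≠ ⊤ :=
    ENNReal.div_ne_top (ENNReal.mul_ne_top ofReal_ne_top (ENNReal.inv_ne_top.2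
      (tsub_pos_of_lt hθ).ne')) (by simp [NNReal.pi_ne_zero])
  have hfin := ae_liminf_lt_top_of_lintegral_le (μ := vol.restrict V) (f := fun n l =>
      μ.prod μ (Prod.mk l ⁻¹' S n) / volume (closedBall (0 : ℂ) (u n)))
    (fun n => (measurable_measure_prodMk_left (hS n)).div_const _) hK fun n => ?_
  · filter_upwards [hfin, ae_restrict_mem hVo.measurableSet] with l hl hlV
    simpa only [hslice hlV] using hl
  have hu2 : ENNReal.ofReal (u n) ^ 2 ≠ 0 := pow_ne_zero _ (ofReal_pos.2 (hu n).1).ne'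
  calc ∫⁻ l in V, μ.prod μ (Prod.mk l ⁻¹' S n) / volume (closedBall (0 : ℂ) (u n)) ∂vol
      = (∫⁻ l in V, μ.prod μ {pq | ‖codingMap (a l) (b l) pq.1 - codingMap (a l) (b l) pq.2‖
          ≤ u n} ∂vol) / (ENNReal.ofReal (u n) ^ 2 * NNReal.pi) := by
        simp_rw [Complex.volume_closedBall, div_eq_mul_inv]
        rw [lintegral_mul_const' _ _
          (ENNReal.inv_ne_top.2 (mul_ne_zero hu2 (by simp [NNReal.pi_ne_zero])))]
        congr 1
        exact setLIntegral_congr_fun hVo.measurableSet fun l hl => by rw [hslice hl]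
    _ ≤ ENNReal.ofReal (C * u n ^ 2) * (1 - θ)⁻¹ / (ENNReal.ofReal (u n) ^ 2 * NNReal.pi) := by
        gcongr
        exact setLIntegral_measure_prod_setOf_norm_codingMap_sub_le hF hC.le hTC hVo hVU hA hμ hdiag
          (hu n)
    _ = _ := by
        rw [ENNReal.ofReal_mul hC.le, ENNReal.ofReal_pow (hu n).1.le, mul_right_comm,
          mul_comm _ (NNReal.pi : ℝ≥0∞)]
        exact ENNReal.mul_div_mul_right _ _ hu2 (pow_ne_top ofReal_ne_top)

end TransversalFamily

lemma sum_sq_mul_rpow_neg_sq_lt_one {ι : Type*} [Fintype ι] [Nonempty ι] {c : ι → ℝ} {s : ℝ}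
    (hc : ∀ i, 1 < c i) (hs : 2 < s) (hsum : ∑ i, c i ^ (-s) = 1) :
    ∑ i, c i ^ 2 * (c i ^ (-s)) ^ 2 < 1 := by
  refine hsum ▸ Finset.sum_lt_sum_of_nonempty Finset.univ_nonempty fun i _ => ?_
  have hc0 : 0 < c i := one_pos.trans (hc i)
  have hw : 0 < c i ^ (-s) := Real.rpow_pos_of_pos hc0 _
  have hlt : c i ^ 2 * c i ^ (-s) < 1 := by
    rw [← Real.rpow_two, ← Real.rpow_add hc0]
    exact Real.rpow_lt_one_of_one_lt_of_neg (hc i) (by linarith)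
  calc c i ^ 2 * (c i ^ (-s)) ^ 2 = (c i ^ 2 * c i ^ (-s)) * c i ^ (-s) := by ring
    _ < 1 * c i ^ (-s) := by gcongr
    _ = c i ^ (-s) := one_mul _

lemma exists_ball_forall_norm_le_and_sum_lt_one {m : ℕ} {E : Type*} [PseudoMetricSpace E]
    {U : Set E} (hU : IsOpen U) {l₀ : E} (hl₀ : l₀ ∈ U) {a : E → Fin m → ℂ}
    (ha : ∀ i, ContinuousOn (fun l => a l i) U) {w : Fin m → ℝ}
    (h : ∑ i, ‖a l₀ i‖ ^ 2 * w i ^ 2 < 1) :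
    ∃ δ > 0, ball l₀ δ ⊆ U ∧ ∃ A : Fin m → ℝ,
      (∀ l ∈ ball l₀ δ, ∀ i, ‖a l i‖ ≤ A i) ∧ ∑ i, A i ^ 2 * w i ^ 2 < 1 := by
  have hcont : Continuous fun ε : ℝ => ∑ i, (‖a l₀ i‖ + ε) ^ 2 * w i ^ 2 := by fun_prop
  obtain ⟨ε, hεθ, hε⟩ := (((hcont.tendsto 0).eventually (gt_mem_nhds (by simpa using h)))
    |>.filter_mono nhdsWithin_le_nhds |>.and (self_mem_nhdsWithin (s := Ioi (0 : ℝ)))).exists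
  have hnear : ∀ᶠ l in 𝓝 l₀, l ∈ U ∧ ∀ i, ‖a l i‖ < ‖a l₀ i‖ + ε := by
    refine Filter.Eventually.and (hU.mem_nhds hl₀) (eventually_all.2 fun i => ?_)
    exact ((ha i).continuousAt (hU.mem_nhds hl₀)).norm.eventually_lt_const (by simpa using hε)
  obtain ⟨δ, hδ, hball⟩ := Metric.eventually_nhds_iff_ball.1 hnear
  exact ⟨δ, hδ, fun l hl => (hball l hl).1, fun i => ‖a l₀ i‖ + ε,
    fun l hl i => ((hball l hl).2 i).le, hεθ⟩

lemma sum_ofReal_sq_mul_ofReal_sq_lt_one {ι : Type*} [Fintype ι] {A w : ι → ℝ}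
    (hw : ∀ i, 0 ≤ w i) (h : ∑ i, A i ^ 2 * w i ^ 2 < 1) :
    ∑ i, ENNReal.ofReal (A i ^ 2) * ENNReal.ofReal (w i) ^ 2 < 1 := by
  convert ENNReal.ofReal_lt_one.2 h using 1
  rw [ENNReal.ofReal_sum_of_nonneg fun i _ => by positivity]
  refine Finset.sum_congr rfl fun i _ => ?_
  rw [ENNReal.ofReal_mul (by positivity), ENNReal.ofReal_pow (hw i)]

theorem stmt4_general {m d : ℕ} (hm : 2 ≤ m)
    (U : Set (EuclideanSpace ℝ (Fin d))) (hUo : IsOpen U)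
    (a b : EuclideanSpace ℝ (Fin d) → Fin m → ℂ)
    (ha : ∀ i, ContinuousOn (fun l => a l i) U)
    (hb : ∀ i, ContinuousOn (fun l => b l i) U)
    (η B : ℝ) (hη : 1 < η) (hB : 0 < B)
    (haη : ∀ l ∈ U, ∀ i, η ≤ ‖a l i‖)
    (hbB : ∀ l ∈ U, ∀ i, ‖b l i‖ ≤ B)
    (s : EuclideanSpace ℝ (Fin d) → ℝ)
    (hs : ∀ l ∈ U, 0 ≤ s l ∧ ∑ i, ‖a l i‖ ^ (-(s l)) = 1)
    (hTC : TCond volume U a b (2 * B / (η - 1)))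
    (l₀ : EuclideanSpace ℝ (Fin d)) (hl₀ : l₀ ∈ U) (hs₀ : 2 < s l₀)
    (μ : Measure (ℕ → Fin m))
    (hμ : ∀ (n : ℕ) (c : ℕ → Fin m),
      μ {ω | ∀ k < n, ω k = c k}
        = ENNReal.ofReal (∏ k ∈ Finset.range n, ‖a l₀ (c k)‖ ^ (-(s l₀)))) :
    ∃ δ > (0:ℝ), Metric.ball l₀ δ ⊆ U ∧
      ∀ᵐ l ∂(volume.restrict (Metric.ball l₀ δ)),
        (μ.map (codingMap (a l) (b l))) ≪ (volume : Measure ℂ) ∧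
        MemLp (fun z => ((μ.map (codingMap (a l) (b l))).rnDeriv volume z).toReal)
          2 (volume : Measure ℂ) ∧
        0 < volume (limitSet (a l) (b l)) := by
  have : NeZero m := ⟨by omega⟩
  set w : Fin m → ℝ := fun i => ‖a l₀ i‖ ^ (-s l₀)
  have hw (i : Fin m) : 0 ≤ w i := Real.rpow_nonneg (norm_nonneg _) _
  obtain ⟨δ, hδ, hball, A, hA, hθ⟩ := exists_ball_forall_norm_le_and_sum_lt_one hUo hl₀ ha
    (sum_sq_mul_rpow_neg_sq_lt_one (fun i => hη.trans_le (haη l₀ hl₀ i)) hs₀ (hs l₀ hl₀).2)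
  have hμ' (n : ℕ) (c : ℕ → Fin m) :
      μ {ω | ∀ k < n, ω k = c k} = ∏ k ∈ Finset.range n, ENNReal.ofReal (w (c k)) := by
    rw [hμ, ENNReal.ofReal_prod_of_nonneg fun k _ => hw _]
  have : IsProbabilityMeasure μ := ⟨by simpa using hμ' 0 fun _ => 0⟩
  have hθ' := sum_ofReal_sq_mul_ofReal_sq_lt_one hw hθ
  -- `∑ pᵢ² ≤ θ` because `A_i ≥ |a_i(λ₀)| > 1`.
  have hdiag := measure_prod_diagonal_eq_zero hμ' (hθ'.trans_le' (Finset.sum_le_sum fun i _ =>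
    le_mul_of_one_le_left' (ENNReal.one_le_ofReal.2 (one_le_pow₀
      (hη.le.trans ((haη l₀ hl₀ i).trans (hA l₀ (mem_ball_self hδ) i)))))))
  set D := 2 * B / (η - 1)
  have hD : 0 < D := div_pos (by positivity) (by linarith)
  refine ⟨δ, hδ, hball, ?_⟩
  filter_upwards [ae_liminf_measure_prod_div_volume_lt_top ⟨hη, haη, hbB, ha, hb⟩ hTC
    isOpen_ball hball hA hμ' hdiag hθ' (u := fun n => D / (n + 1 : ℕ)) fun n =>
      ⟨div_pos hD (by positivity), div_le_self hD.le (by simp)⟩, ae_restrict_mem measurableSet_ball]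
    with l hl hlδ
  exact absolutelyContinuous_memLp_volume_limitSet_pos hη (haη l (hball hlδ)) (hbB l (hball hlδ))
    μ (fun n => div_pos hD (by positivity)) ((tendsto_const_div_atTop_nhds_zero_nat D).comp
      (tendsto_add_atTop_nat 1)) hl

/-- **Lemma 3.7** (expanding affine case). Let a continuous expanding affine family over a
nonempty bounded open `U ⊆ ℝ^d` satisfy the transversality condition, let `λ₀ ∈ U` with
`s(λ₀) > 2`, and let `μ` be the Bernoulli measure on `Σ_m` with weights
`(|a_i(λ₀)|^{-s(λ₀)})_i` (characterized by its values on cylinder sets). Then there is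
`δ > 0` with `B(λ₀,δ) ⊆ U` such that for Lebesgue-a.e. `λ ∈ B(λ₀,δ)` the pushforward
`(π_λ)_* μ` is absolutely continuous w.r.t. `Leb₂` with density in `L²`, and
`Leb₂(J_λ) > 0`. -/
theorem stmt4 {m d : ℕ} (hm : 2 ≤ m)
    (U : Set (EuclideanSpace ℝ (Fin d))) (hUo : IsOpen U) (hUne : U.Nonempty)
    (hUbd : Bornology.IsBounded U)
    (a b : EuclideanSpace ℝ (Fin d) → Fin m → ℂ)
    (ha : ∀ i, ContinuousOn (fun l => a l i) U)
    (hb : ∀ i, ContinuousOn (fun l => b l i) U)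
    (η B : ℝ) (hη : 1 < η) (hB : 0 < B)
    (haη : ∀ l ∈ U, ∀ i, η ≤ ‖a l i‖)
    (hbB : ∀ l ∈ U, ∀ i, ‖b l i‖ ≤ B)
    (s : EuclideanSpace ℝ (Fin d) → ℝ)
    (hs : ∀ l ∈ U, 0 ≤ s l ∧ ∑ i, ‖a l i‖ ^ (-(s l)) = 1)
    (hTC : TCond volume U a b (2 * B / (η - 1)))
    (l₀ : EuclideanSpace ℝ (Fin d)) (hl₀ : l₀ ∈ U) (hs₀ : 2 < s l₀)
    (μ : Measure (ℕ → Fin m))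
    (hμ : ∀ (n : ℕ) (c : ℕ → Fin m),
      μ {ω | ∀ k < n, ω k = c k}
        = ENNReal.ofReal (∏ k ∈ Finset.range n, ‖a l₀ (c k)‖ ^ (-(s l₀)))) :
    ∃ δ > (0:ℝ), Metric.ball l₀ δ ⊆ U ∧
      ∀ᵐ l ∂(volume.restrict (Metric.ball l₀ δ)),
        (μ.map (codingMap (a l) (b l))) ≪ (volume : Measure ℂ) ∧
        MemLp (fun z => ((μ.map (codingMap (a l) (b l))).rnDeriv volume z).toReal)
          2 (volume : Measure ℂ) ∧
        0 < volume (limitSet (a l) (b l)) :=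
  stmt4_general hm U hUo a b ha hb η B hη hB haη hbB s hs hTC l₀ hl₀ hs₀ μ hμ
end

section
/- Lemma 3.15 (abstract form of the strong transversality integral estimate): Let d ∈ ℕ, let U ⊆ ℝ^d be a bounded open set, let D > 0, and let F : U → [0, D] be a Borel measurable function. Suppose there is C₁′ > 0 such that for every r ∈ (0, D) the set {λ ∈ U : F(λ) ≤ r} can be covered by at most C₁′ r^{2−d} balls of radius r. Let u ≥ 0 with u − d + 2 > 0, let ν be a Frostman measure on U with exponent u and constant c, and let α ∈ (0, u − d + 2). Then ∫_U F(λ)^{−α} dν(λ) ≤ (α c C₁′/(u − d + 2 − α)) D^{u−d+2−α} + D^{−α}. -/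
open MeasureTheory Filter Set Metric ENNReal
open scoped Topology

/-!
Covering the sublevel set `{F ≤ r}` by at most `C₁' r^(2-d)` closed balls, each of `ν`-mass
at most `c r^u`, gives `ν {F ≤ r} ≤ c C₁' r^(u-d+2)` for `0 < r < D`. By the layer-cake
formula `∫ F^(-α) dν = ∫₀^∞ ν {t < F^(-α)} dt`; the range `t ≤ D^(-α)` contributes at most
`D^(-α)`, and for `t > D^(-α)` the sublevel bound at `r = t^(-1/α) < D` gives the integrable
tail `c C₁' t^(-(u-d+2)/α)`, whose integral is the first term.
-/

section Frostman

variable {X : Type*} [PseudoMetricSpace X] [MeasurableSpace X] {μ : Measure X} {c u : ℝ}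

theorem measure_closedBall_le_of_measure_ball_le
    (hμ : ∀ (x : X) (r : ℝ), 0 < r → μ (ball x r) ≤ ENNReal.ofReal (c * r ^ u))
    (x : X) {r : ℝ} (hr : 0 < r) : μ (closedBall x r) ≤ ENNReal.ofReal (c * r ^ u) := by
  have hcont : Tendsto (fun ρ : ℝ => ENNReal.ofReal (c * ρ ^ u)) (𝓝[>] r)
      (𝓝 (ENNReal.ofReal (c * r ^ u))) :=
    ((ENNReal.continuous_ofReal.tendsto _).comp
      (continuousAt_const.mul (Real.continuousAt_rpow_const r u (Or.inl hr.ne')))).mono_left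
      nhdsWithin_le_nhds
  refine ge_of_tendsto hcont ?_
  filter_upwards [self_mem_nhdsWithin] with ρ (hρ : r < ρ)
  exact (measure_mono (closedBall_subset_ball hρ)).trans (hμ x ρ (hr.trans hρ))

theorem measure_le_of_subset_biUnion_closedBall
    (hμ : ∀ (x : X) (r : ℝ), 0 < r → μ (ball x r) ≤ ENNReal.ofReal (c * r ^ u))
    {s : Set X} {S : Finset X} {r N : ℝ} (hr : 0 < r) (hS : (S.card : ℝ) ≤ N)
    (hs : s ⊆ ⋃ x ∈ S, closedBall x r) : μ s ≤ ENNReal.ofReal (N * (c * r ^ u)) :=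
  calc μ s ≤ ∑ x ∈ S, μ (closedBall x r) :=
        (measure_mono hs).trans (measure_biUnion_finset_le _ _)
    _ ≤ ∑ _x ∈ S, ENNReal.ofReal (c * r ^ u) :=
      Finset.sum_le_sum fun x _ => measure_closedBall_le_of_measure_ball_le hμ x hr
    _ = ENNReal.ofReal (S.card) * ENNReal.ofReal (c * r ^ u) := by
      rw [Finset.sum_const, nsmul_eq_mul, ENNReal.ofReal_natCast]
    _ ≤ ENNReal.ofReal N * ENNReal.ofReal (c * r ^ u) := by gcongr
    _ = ENNReal.ofReal (N * (c * r ^ u)) :=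
      (ENNReal.ofReal_mul ((Nat.cast_nonneg _).trans hS)).symm

end Frostman

theorem lintegral_Ioi_ofReal_rpow {a T : ℝ} (ha : a < -1) (hT : 0 < T) :
    ∫⁻ t in Ioi T, ENNReal.ofReal (t ^ a) = ENNReal.ofReal (-T ^ (a + 1) / (a + 1)) := by
  rw [← integral_Ioi_rpow_of_lt ha hT, ofReal_integral_eq_lintegral_ofReal
    (integrableOn_Ioi_rpow_of_lt ha hT)]
  filter_upwards [self_mem_ae_restrict measurableSet_Ioi] with t (ht : T < t)
  exact Real.rpow_nonneg (hT.trans ht).le a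

section LayerCake

variable {Ω : Type*} [MeasurableSpace Ω] {μ : Measure Ω} {f : Ω → ℝ} {D K s α : ℝ}

theorem measure_eq_zero_of_forall_le_rpow {A : Set Ω} (hD : 0 < D) (hs : 0 < s)
    (hA : ∀ r ∈ Ioo 0 D, μ A ≤ ENNReal.ofReal (K * r ^ s)) : μ A = 0 := by
  have hlim : Tendsto (fun r : ℝ => ENNReal.ofReal (K * r ^ s)) (𝓝[>] 0) (𝓝 0) := by
    have hcont : Continuous fun r : ℝ => ENNReal.ofReal (K * r ^ s) :=
      ENNReal.continuous_ofReal.comp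
        (continuous_const.mul (Real.continuous_rpow_const hs.le))
    have := (hcont.tendsto 0).mono_left (nhdsWithin_le_nhds (s := Ioi 0))
    simpa [Real.zero_rpow hs.ne'] using this
  refine le_antisymm (ge_of_tendsto hlim ?_) zero_le
  filter_upwards [Ioo_mem_nhdsGT hD] with r hr using hA r hr

theorem measure_lt_rpow_neg_le (hf : 0 ≤ᵐ[μ] f) (hD : 0 < D) (hα : 0 < α)
    (hsub : ∀ r ∈ Ioo 0 D, μ {ω | f ω ≤ r} ≤ ENNReal.ofReal (K * r ^ s))
    {t : ℝ} (ht : D ^ (-α) < t) :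
    μ {ω | t < f ω ^ (-α)} ≤ ENNReal.ofReal (K * t ^ (-(s / α))) := by
  have hα' : -α < 0 := neg_lt_zero.2 hα
  have ht0 : 0 < t := (Real.rpow_pos_of_pos hD _).trans ht
  have hr : t ^ (-α)⁻¹ ∈ Ioo 0 D :=
    ⟨Real.rpow_pos_of_pos ht0 _, (Real.rpow_inv_lt_iff_of_neg ht0 hD hα').2 ht⟩
  have hmono : {ω | t < f ω ^ (-α)} ≤ᵐ[μ] {ω | f ω ≤ t ^ (-α)⁻¹} := by
    filter_upwards [hf] with ω (h0 : 0 ≤ f ω) (hlt : t < f ω ^ (-α))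
    have hpos : 0 < f ω := h0.lt_of_ne <| by
      rintro h
      rw [← h, Real.zero_rpow hα'.ne] at hlt
      exact hlt.not_gt ht0
    exact (Real.le_rpow_inv_iff_of_neg hpos ht0 hα').2 hlt.le
  calc μ {ω | t < f ω ^ (-α)} ≤ μ {ω | f ω ≤ t ^ (-α)⁻¹} := measure_mono_ae hmono
    _ ≤ ENNReal.ofReal (K * (t ^ (-α)⁻¹) ^ s) := hsub _ hr
    _ = ENNReal.ofReal (K * t ^ (-(s / α))) := by
      rw [← Real.rpow_mul ht0.le, inv_neg, neg_mul, inv_mul_eq_div]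

theorem lintegral_rpow_neg_le_of_measure_le_rpow (hf : Measurable f) (hf_nonneg : 0 ≤ᵐ[μ] f)
    (hD : 0 < D) (hK : 0 ≤ K) (hα : 0 < α) (hαs : α < s)
    (hsub : ∀ r ∈ Ioo 0 D, μ {ω | f ω ≤ r} ≤ ENNReal.ofReal (K * r ^ s)) :
    ∫⁻ ω, ENNReal.ofReal (f ω) ^ (-α) ∂μ
      ≤ ENNReal.ofReal (α * K / (s - α) * D ^ (s - α))
        + μ univ * ENNReal.ofReal (D ^ (-α)) := by
  set T := D ^ (-α)
  have hT : 0 < T := Real.rpow_pos_of_pos hD _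
  have hzero : μ {ω | f ω = 0} = 0 :=
    measure_eq_zero_of_forall_le_rpow hD (hα.trans hαs) fun r hr =>
      (measure_mono fun ω (h : f ω = 0) => (show f ω ≤ r from h ▸ hr.1.le)).trans (hsub r hr)
  -- `Real.rpow` has `0 ^ (-α) = 0` whereas `ℝ≥0∞` has `0 ^ (-α) = ⊤`,
  -- so the two integrands agree only off the null set `{f = 0}`.
  have hae : (fun ω => ENNReal.ofReal (f ω) ^ (-α))
      =ᵐ[μ] fun ω => ENNReal.ofReal (f ω ^ (-α)) := by
    filter_upwards [hf_nonneg, measure_eq_zero_iff_ae_notMem.1 hzero] with ω h0 hne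
    exact ENNReal.ofReal_rpow_of_pos (h0.lt_of_ne (Ne.symm hne))
  have hhead : ∫⁻ t in Ioc 0 T, μ {ω | t < f ω ^ (-α)} ≤ μ univ * ENNReal.ofReal T :=
    calc _ ≤ ∫⁻ t in Ioc 0 T, μ univ := lintegral_mono fun t => measure_mono (subset_univ _)
      _ = _ := by rw [setLIntegral_const, Real.volume_Ioc, sub_zero]
  have htail : ∫⁻ t in Ioi T, μ {ω | t < f ω ^ (-α)}
      ≤ ENNReal.ofReal (α * K / (s - α) * D ^ (s - α)) :=
    calc _ ≤ ∫⁻ t in Ioi T, ENNReal.ofReal (K * t ^ (-(s / α))) :=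
          setLIntegral_mono (by fun_prop) fun t ht =>
            measure_lt_rpow_neg_le hf_nonneg hD hα hsub ht
      _ = ENNReal.ofReal K * ENNReal.ofReal (-T ^ (-(s / α) + 1) / (-(s / α) + 1)) := by
          simp_rw [ENNReal.ofReal_mul hK]
          rw [lintegral_const_mul _ (by fun_prop), lintegral_Ioi_ofReal_rpow ?_ hT]
          rwa [neg_lt_neg_iff, one_lt_div hα]
      _ = ENNReal.ofReal (α * K / (s - α) * D ^ (s - α)) := by
          have hsα : s - α ≠ 0 := sub_ne_zero.2 hαs.ne'
          have hexp : -(s / α) + 1 = -((s - α) / α) := by field_simp; ring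
          rw [← ENNReal.ofReal_mul hK, hexp, ← Real.rpow_mul hD.le, neg_mul_neg,
            mul_div_cancel₀ _ hα.ne', neg_div_neg_eq]
          congr 1
          field_simp
  rw [lintegral_congr_ae hae, lintegral_eq_lintegral_meas_lt μ
      (hf_nonneg.mono fun ω h => Real.rpow_nonneg h _) (hf.pow_const _).aemeasurable,
    ← Ioc_union_Ioi_eq_Ioi hT.le, lintegral_union measurableSet_Ioi Ioc_disjoint_Ioi_same,
    add_comm]
  exact add_le_add htail hhead

end LayerCake

theorem stmt7_general {d : ℕ} (U : Set (EuclideanSpace ℝ (Fin d)))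
    (D : ℝ) (hD : 0 < D)
    (F : EuclideanSpace ℝ (Fin d) → ℝ) (hFmeas : Measurable F)
    (hFrange : ∀ l ∈ U, F l ∈ Set.Icc 0 D)
    (C₁' : ℝ) (hC₁' : 0 < C₁')
    (hSTC : ∀ r ∈ Set.Ioo (0:ℝ) D,
      ∃ S : Finset (EuclideanSpace ℝ (Fin d)),
        (S.card : ℝ) ≤ C₁' * r ^ ((2:ℝ) - d) ∧
        {l ∈ U | F l ≤ r} ⊆ ⋃ x ∈ S, Metric.closedBall x r)
    (u : ℝ)
    (ν : Measure (EuclideanSpace ℝ (Fin d)))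
    (hνU : ν U = 1) (c : ℝ) (hc : 0 < c)
    (hFrost : ∀ (x : EuclideanSpace ℝ (Fin d)) (r : ℝ), 0 < r →
      ν (Metric.ball x r) ≤ ENNReal.ofReal (c * r ^ u))
    (α : ℝ) (hα : α ∈ Set.Ioo (0:ℝ) (u - d + 2)) :
    ∫⁻ l in U, (ENNReal.ofReal (F l)) ^ (-α) ∂ν
      ≤ ENNReal.ofReal (α * c * C₁' / (u - d + 2 - α) * D ^ (u - d + 2 - α))
        + ENNReal.ofReal (D ^ (-α)) := by
  have hsub : ∀ r ∈ Ioo 0 D,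
      ν.restrict U {l | F l ≤ r} ≤ ENNReal.ofReal (c * C₁' * r ^ (u - d + 2)) := by
    intro r hr
    obtain ⟨S, hS_card, hS_cover⟩ := hSTC r hr
    rw [Measure.restrict_apply (measurableSet_le hFmeas measurable_const)]
    calc ν ({l | F l ≤ r} ∩ U) ≤ ENNReal.ofReal (C₁' * r ^ ((2:ℝ) - d) * (c * r ^ u)) :=
          measure_le_of_subset_biUnion_closedBall hFrost hr.1 hS_card
            fun l ⟨hl, hlU⟩ => hS_cover ⟨hlU, hl⟩
      _ = ENNReal.ofReal (c * C₁' * r ^ (u - d + 2)) := by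
          rw [show u - d + 2 = (2 - d) + u by ring, Real.rpow_add hr.1]
          ring_nf
  have hF_nonneg : 0 ≤ᵐ[ν.restrict U] F :=
    (ae_restrict_iff (measurableSet_le measurable_const hFmeas)).2
      (Eventually.of_forall fun l hl => (hFrange l hl).1)
  have hbound := lintegral_rpow_neg_le_of_measure_le_rpow hFmeas hF_nonneg hD (by positivity)
    hα.1 hα.2 hsub
  rwa [Measure.restrict_apply_univ, hνU, one_mul, ← mul_assoc] at hbound

/-- **Lemma 3.15** (abstract form of the strong transversality integral estimate).
Let `F : U → [0,D]` be Borel measurable on a bounded open `U ⊆ ℝ^d`, and suppose each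
sublevel set `{λ ∈ U : F(λ) ≤ r}` (`0 < r < D`) can be covered by at most `C₁' r^(2-d)`
balls of radius `r`. If `ν` is a Frostman measure on `U` with exponent `u`
(`ν(B(x,r)) ≤ c r^u`), `u - d + 2 > 0` and `α ∈ (0, u - d + 2)`, then
`∫_U F(λ)^(-α) dν(λ) ≤ (α c C₁'/(u-d+2-α)) D^(u-d+2-α) + D^(-α)`. -/
theorem stmt7 {d : ℕ} (U : Set (EuclideanSpace ℝ (Fin d)))
    (hUo : IsOpen U) (hUbd : Bornology.IsBounded U)
    (D : ℝ) (hD : 0 < D)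
    (F : EuclideanSpace ℝ (Fin d) → ℝ) (hFmeas : Measurable F)
    (hFrange : ∀ l ∈ U, F l ∈ Set.Icc 0 D)
    (C₁' : ℝ) (hC₁' : 0 < C₁')
    (hSTC : ∀ r ∈ Set.Ioo (0:ℝ) D,
      ∃ S : Finset (EuclideanSpace ℝ (Fin d)),
        (S.card : ℝ) ≤ C₁' * r ^ ((2:ℝ) - d) ∧
        {l ∈ U | F l ≤ r} ⊆ ⋃ x ∈ S, Metric.closedBall x r)
    (u : ℝ) (hu : 0 ≤ u) (hud : 0 < u - d + 2)
    (ν : Measure (EuclideanSpace ℝ (Fin d))) [IsProbabilityMeasure ν]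
    (hνU : ν U = 1) (c : ℝ) (hc : 0 < c)
    (hFrost : ∀ (x : EuclideanSpace ℝ (Fin d)) (r : ℝ), 0 < r →
      ν (Metric.ball x r) ≤ ENNReal.ofReal (c * r ^ u))
    (α : ℝ) (hα : α ∈ Set.Ioo (0:ℝ) (u - d + 2)) :
    ∫⁻ l in U, (ENNReal.ofReal (F l)) ^ (-α) ∂ν
      ≤ ENNReal.ofReal (α * c * C₁' / (u - d + 2 - α) * D ^ (u - d + 2 - α))
        + ENNReal.ofReal (D ^ (-α)) :=
  stmt7_general U D hD F hFmeas hFrange C₁' hC₁' hSTC u ν hνU c hc hFrost α hα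
end

section
/- Key derivative estimates from the proof of Theorem 4.3: Let a ∈ ℂ with |a| > 1, let f_1(z) = az² and f_2(z) = z², and for n ≥ 1 set F_n = f_2^{∘(n−1)} ∘ f_1 (so F_1 = f_1). Then for every z ∈ ℂ with |z| = |a|^{−1/2}: (a) |F_n′(z)| = 2^n |a|^{1/2} for every n ≥ 1; (b) the series Σ_{n=2}^∞ 1/F_n′(z) converges absolutely and |Σ_{n=2}^∞ 1/F_n′(z)| ≤ |a|^{−1/2}/2; and (c) −1/(2z) + Σ_{n=2}^∞ 1/F_n′(z) ≠ 0. -/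
/-- `Fn a n = f₂^{∘(n-1)} ∘ f₁` where `f₁(z) = a z²` and `f₂(z) = z²`; so `Fn a 1 = f₁`. -/
noncomputable def Fn (a : ℂ) (n : ℕ) (z : ℂ) : ℂ :=
  (fun w : ℂ => w ^ 2)^[n - 1] (a * z ^ 2)

/-! Since `F_n(z) = (a z²)^{2^{n-1}}` is a monomial of degree `2ⁿ`, its logarithmic derivative is
`2ⁿ / z`. On the circle `|a z²| = 1` this gives `|F_n′(z)| = 2ⁿ / |z|`, so `∑_{n≥2} |1/F_n′(z)|` is
the geometric series `|z| / 2`, which is smaller than `|1/(2z)|` as soon as `|z| < 1`. -/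

lemma Fn_apply (a : ℂ) (n : ℕ) (z : ℂ) : Fn a n z = (a * z ^ 2) ^ 2 ^ (n - 1) := by
  rw [Fn, pow_iterate]

lemma mul_deriv_Fn (a : ℂ) {n : ℕ} (hn : 1 ≤ n) (z : ℂ) :
    z * deriv (Fn a n) z = 2 ^ n * Fn a n z := by
  obtain ⟨m, rfl⟩ := Nat.exists_eq_add_of_le' hn
  have hFn : Fn a (m + 1) = fun w => (a * w ^ 2) ^ 2 ^ m := funext (Fn_apply a _)
  have hderiv := ((hasDerivAt_pow 2 z).const_mul a).fun_pow (2 ^ m)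
  rw [← hFn] at hderiv
  have hpow : (a * z ^ 2) ^ (2 ^ m - 1) * (a * z ^ 2) = (a * z ^ 2) ^ 2 ^ m :=
    pow_sub_one_mul (pow_ne_zero m two_ne_zero) _
  rw [hderiv.deriv, Fn_apply, Nat.add_sub_cancel, ← hpow]
  push_cast
  ring

lemma norm_deriv_Fn {a z : ℂ} (h : ‖a * z ^ 2‖ = 1) {n : ℕ} (hn : 1 ≤ n) :
    ‖deriv (Fn a n) z‖ = 2 ^ n / ‖z‖ := by
  have hz : ‖z‖ ≠ 0 := by
    intro hz
    simp [norm_eq_zero.mp hz] at h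
  have hmul := congrArg norm (mul_deriv_Fn a hn z)
  rw [norm_mul, norm_mul, Fn_apply, norm_pow, norm_pow, h, one_pow, mul_one,
    Complex.norm_two] at hmul
  rw [eq_div_iff hz, ← hmul, mul_comm]

lemma hasSum_norm_inv_deriv_Fn {a z : ℂ} (h : ‖a * z ^ 2‖ = 1) :
    HasSum (fun n : ℕ => ‖(deriv (Fn a (n + 2)) z)⁻¹‖) (‖z‖ / 2) := by
  have hterm : ∀ n : ℕ, ‖(deriv (Fn a (n + 2)) z)⁻¹‖ = ‖z‖ / 4 * (1 / 2) ^ n := by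
    intro n
    rw [norm_inv, norm_deriv_Fn h (by omega), inv_div, pow_add, one_div, inv_pow]
    ring
  simp_rw [hterm]
  have hsum := hasSum_geometric_two.mul_left (‖z‖ / 4)
  rwa [show ‖z‖ / 4 * 2 = ‖z‖ / 2 by ring] at hsum

lemma norm_tsum_inv_deriv_Fn_le {a z : ℂ} (h : ‖a * z ^ 2‖ = 1) :
    ‖∑' n : ℕ, (deriv (Fn a (n + 2)) z)⁻¹‖ ≤ ‖z‖ / 2 :=
  tsum_of_norm_bounded (hasSum_norm_inv_deriv_Fn h) fun _ => le_rfl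

lemma neg_inv_add_tsum_inv_deriv_Fn_ne_zero {a z : ℂ} (h : ‖a * z ^ 2‖ = 1) (hz : ‖z‖ < 1) :
    -1 / (2 * z) + ∑' n : ℕ, (deriv (Fn a (n + 2)) z)⁻¹ ≠ 0 := by
  have hz0 : 0 < ‖z‖ := by
    refine norm_pos_iff.mpr fun hz0 => ?_
    simp [hz0] at h
  have hlt : ‖∑' n : ℕ, (deriv (Fn a (n + 2)) z)⁻¹‖ < ‖1 / (2 * z)‖ := by
    calc ‖∑' n : ℕ, (deriv (Fn a (n + 2)) z)⁻¹‖ ≤ ‖z‖ / 2 := norm_tsum_inv_deriv_Fn_le h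
      _ < 1 / (2 * ‖z‖) := by
        rw [div_lt_div_iff₀ two_pos (by positivity)]
        nlinarith
      _ = ‖1 / (2 * z)‖ := by simp
  intro hsum
  rw [neg_div, neg_add_eq_zero] at hsum
  exact hlt.ne (congrArg norm hsum).symm

/-- **Key derivative estimates from the proof of Theorem 4.3.** Let `|a| > 1`,
`f₁(z) = az²`, `f₂(z) = z²` and `F_n = f₂^{∘(n-1)} ∘ f₁`. Then for `|z| = |a|^{-1/2}`:
(a) `|F_n′(z)| = 2^n |a|^{1/2}` for all `n ≥ 1`;
(b) `∑_{n≥2} 1/F_n′(z)` converges absolutely and `|∑_{n≥2} 1/F_n′(z)| ≤ |a|^{-1/2}/2`;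
(c) `-1/(2z) + ∑_{n≥2} 1/F_n′(z) ≠ 0`. -/
theorem stmt19 (a : ℂ) (ha : 1 < ‖a‖)
    (z : ℂ) (hz : ‖z‖ = ‖a‖ ^ (-(1:ℝ)/2)) :
    (∀ n : ℕ, 1 ≤ n →
      ‖deriv (Fn a n) z‖ = 2 ^ n * ‖a‖ ^ ((1:ℝ)/2)) ∧
    Summable (fun n : ℕ => ‖(deriv (Fn a (n + 2)) z)⁻¹‖) ∧
    ‖∑' n : ℕ, (deriv (Fn a (n + 2)) z)⁻¹‖
      ≤ ‖a‖ ^ (-(1:ℝ)/2) / 2 ∧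
    -1 / (2 * z) + ∑' n : ℕ, (deriv (Fn a (n + 2)) z)⁻¹ ≠ 0 := by
  have ha0 : 0 < ‖a‖ := one_pos.trans ha
  have hcircle : ‖a * z ^ 2‖ = 1 := by
    rw [norm_mul, norm_pow, hz, ← Real.rpow_natCast, ← Real.rpow_mul ha0.le]
    norm_num [Real.rpow_neg_one, ha0.ne']
  have hinv : ‖a‖ ^ ((1:ℝ)/2) = ‖z‖⁻¹ := by
    rw [hz, ← Real.rpow_neg ha0.le]
    norm_num
  have hz1 : ‖z‖ < 1 := hz ▸ Real.rpow_lt_one_of_one_lt_of_neg ha (by norm_num)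
  refine ⟨fun n hn => ?_, (hasSum_norm_inv_deriv_Fn hcircle).summable,
    hz ▸ norm_tsum_inv_deriv_Fn_le hcircle, neg_inv_add_tsum_inv_deriv_Fn_ne_zero hcircle hz1⟩
  rw [norm_deriv_Fn hcircle hn, hinv, div_eq_mul_inv]
end
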